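/- arXiv:1905.03164 — 5 statements merged into one kernel-verified Lean document; each statement's English description precedes it below -/
import Mathlib

section
/- Let F(φ) = φ ln(φ) + (1−φ) ln(1−φ) + θ(φ − φ²) for 0 < φ < 1, and for 0 < b < 1, 0 < a < 1, λ ≥ 0, define f(b,a) = ln(b) − ln(1−b) + (λ+1)·(a/b − (1−a)/(1−b)) + θ·(1 − a − b). Then F(a) − F(b) ≤ f(b,a)·(a − b). -/
/-!
Split `F` into the convex entropy `φ ↦ φ log φ + (1 - φ) log (1 - φ)` and the concave quadratic
`θ (φ - φ²)`. The concave part is handled exactly, since `θ (a - a²) - θ (b - b²) = θ (1 - a - b) (a - b)`.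
For the convex part, `log t ≤ t - 1` at `t = a / b` and at `t = (1 - a) / (1 - b)` bounds each entropy
term by its explicit linearization. The stabilization term adds `λ (a - b)² / (b (1 - b)) ≥ 0`.
-/

noncomputable def FH (θ φ : ℝ) : ℝ :=
  φ * Real.log φ + (1 - φ) * Real.log (1 - φ) + θ * (φ - φ ^ 2)

noncomputable def fchem (lam θ b a : ℝ) : ℝ :=
  Real.log b - Real.log (1 - b) + (lam + 1) * (a / b - (1 - a) / (1 - b)) + θ * (1 - a - b)

lemma mul_log_sub_mul_log_le {x y : ℝ} (hx : 0 ≤ x) (hy : 0 < y) :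
    x * Real.log x - y * Real.log y ≤ (Real.log y + x / y) * (x - y) := by
  rcases hx.eq_or_lt with rfl | hx
  · simp [mul_comm]
  have hlog : Real.log x - Real.log y ≤ x / y - 1 := by
    rw [← Real.log_div hx.ne' hy.ne']
    exact Real.log_le_sub_one_of_pos (div_pos hx hy)
  have key : x * (Real.log x - Real.log y) ≤ x * (x / y - 1) :=
    mul_le_mul_of_nonneg_left hlog hx.le
  have expand : x * (x / y - 1) = x / y * (x - y) := by
    field_simp
  linarith

lemma mul_sub_sq_sub_mul_sub_sq (θ a b : ℝ) :
    θ * (a - a ^ 2) - θ * (b - b ^ 2) = θ * (1 - a - b) * (a - b) := by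
  ring

lemma div_sub_one_sub_div_one_sub_mul_sub_nonneg (a : ℝ) {b : ℝ} (hb : b ∈ Set.Ioo (0 : ℝ) 1) :
    0 ≤ (a / b - (1 - a) / (1 - b)) * (a - b) := by
  obtain ⟨hb0, hb1⟩ := hb
  have hb1' : 0 < 1 - b := by linarith
  have h : (a / b - (1 - a) / (1 - b)) * (a - b) = (a - b) ^ 2 / (b * (1 - b)) := by
    field_simp
    ring
  rw [h]
  positivity

theorem energy_factorization_FH (θ lam a b : ℝ) (hlam : 0 ≤ lam)
    (ha : a ∈ Set.Ioo (0:ℝ) 1) (hb : b ∈ Set.Ioo (0:ℝ) 1) :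
    FH θ a - FH θ b ≤ fchem lam θ b a * (a - b) := by
  have hA := mul_log_sub_mul_log_le ha.1.le hb.1
  have hB := mul_log_sub_mul_log_le (x := 1 - a) (y := 1 - b) (by linarith [ha.2]) (by linarith [hb.2])
  have hC := mul_sub_sq_sub_mul_sub_sq θ a b
  have hstab := mul_nonneg hlam (div_sub_one_sub_div_one_sub_mul_sub_nonneg a hb)
  unfold FH fchem
  linear_combination hA + hB + hC + hstab
end

section
/- Let φ : Fin N × Fin M → ℝ be a grid function, a ∈ ℝ, and define φ₋ = min(φ − a, 0) pointwise. Then, for the standard five-point discrete Laplacian Δ_h with homogeneous Neumann boundary conditions, summing −Δ_h φ against φ₋ over all grid points is bounded below by the discrete H¹ seminorm of φ₋: ‖∇_h φ₋‖² ≤ −⟨Δ_h φ, φ₋⟩. -/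
noncomputable def gradX {N M : ℕ} (h : ℝ) (φ : Fin N × Fin M → ℝ)
    (p : Fin (N + 1) × Fin M) : ℝ :=
  if hp : 0 < p.1.val ∧ p.1.val < N then
    (φ (⟨p.1.val, hp.2⟩, p.2) - φ (⟨p.1.val - 1, by omega⟩, p.2)) / h
  else 0

noncomputable def gradY {N M : ℕ} (h : ℝ) (φ : Fin N × Fin M → ℝ)
    (p : Fin N × Fin (M + 1)) : ℝ :=
  if hp : 0 < p.2.val ∧ p.2.val < M then
    (φ (p.1, ⟨p.2.val, hp.2⟩) - φ (p.1, ⟨p.2.val - 1, by omega⟩)) / h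
  else 0

/-- Cell-centered five-point discrete Laplacian with homogeneous Neumann
boundary conditions (boundary fluxes vanish). -/
noncomputable def discLap {N M : ℕ} (h : ℝ) (φ : Fin N × Fin M → ℝ)
    (p : Fin N × Fin M) : ℝ :=
  (gradX h φ (p.1.succ, p.2) - gradX h φ (p.1.castSucc, p.2)) / h
    + (gradY h φ (p.1, p.2.succ) - gradY h φ (p.1, p.2.castSucc)) / h

/-- Discrete L² inner product. -/
noncomputable def discInner {N M : ℕ} (h : ℝ) (φ ψ : Fin N × Fin M → ℝ) : ℝ :=
  h ^ 2 * ∑ p : Fin N × Fin M, φ p * ψ p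

/-- Discrete H¹ seminorm squared: ‖∇ₕφ‖². -/
noncomputable def discGradNormSq {N M : ℕ} (h : ℝ) (φ : Fin N × Fin M → ℝ) : ℝ :=
  h ^ 2 * ((∑ p : Fin (N + 1) × Fin M, gradX h φ p ^ 2)
    + ∑ p : Fin N × Fin (M + 1), gradY h φ p ^ 2)

lemma trunc_key (u v a : ℝ) :
    (min (u - a) 0 - min (v - a) 0) ^ 2 ≤ (min (u - a) 0 - min (v - a) 0) * (u - v) := by
  rcases le_total (u - a) 0 with h1 | h1 <;> rcases le_total (v - a) 0 with h2 | h2 <;>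
    simp [min_eq_left, min_eq_right, h1, h2] <;> nlinarith

lemma abel_nat (G ψd : ℕ → ℝ) (N : ℕ) :
    ∑ i ∈ Finset.range N, (G (i+1) - G i) * ψd i
      + ∑ j ∈ Finset.range (N+1), G j * (if j = 0 then 0 else ψd j - ψd (j-1))
    = G N * ψd N - G 0 * ψd 0 := by
  induction N with
  | zero => simp
  | succ n ih =>
    rw [Finset.sum_range_succ, Finset.sum_range_succ (f := fun j => G j * (if j = 0 then 0 else ψd j - ψd (j-1)))]
    simp only [Nat.succ_ne_zero, ite_false, if_neg, Nat.add_sub_cancel]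
    linear_combination ih

lemma sbp {N : ℕ} (G : Fin (N+1) → ℝ) (ψ : Fin N → ℝ) (D : Fin (N+1) → ℝ)
    (hG : ∀ q : Fin (N+1), ¬(0 < q.val ∧ q.val < N) → G q = 0)
    (hD : ∀ (q : Fin (N+1)) (hq : 0 < q.val ∧ q.val < N),
      D q = ψ ⟨q.val, hq.2⟩ - ψ ⟨q.val - 1, by omega⟩) :
    ∑ i : Fin N, (G i.succ - G i.castSucc) * ψ i = - ∑ q : Fin (N+1), G q * D q := by
  classical
  set Gn : ℕ → ℝ := fun i => if hi : i < N+1 then G ⟨i, hi⟩ else 0 with hGn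
  set ψn : ℕ → ℝ := fun i => if hi : i < N then ψ ⟨i, hi⟩ else 0 with hψn
  have h1 : ∑ i : Fin N, (G i.succ - G i.castSucc) * ψ i
      = ∑ i ∈ Finset.range N, (Gn (i+1) - Gn i) * ψn i := by
    rw [Finset.sum_range fun i => (Gn (i+1) - Gn i) * ψn i]
    apply Finset.sum_congr rfl
    intro i _
    have hi := i.isLt
    simp only [hGn, hψn, dif_pos (by omega : i.val + 1 < N + 1),
      dif_pos (by omega : i.val < N + 1), dif_pos hi]
    congr 2
  have h2 : ∑ q : Fin (N+1), G q * D q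
      = ∑ j ∈ Finset.range (N+1), Gn j * (if j = 0 then 0 else ψn j - ψn (j-1)) := by
    rw [Finset.sum_range fun j => Gn j * (if j = 0 then 0 else ψn j - ψn (j-1))]
    apply Finset.sum_congr rfl
    intro q _
    have hq := q.isLt
    simp only [hGn, dif_pos hq, Fin.eta]
    by_cases hint : 0 < q.val ∧ q.val < N
    · rw [hD q hint, if_neg (by omega)]
      simp only [hψn, dif_pos hint.2, dif_pos (by omega : q.val - 1 < N)]
    · rw [hG q hint]
      ring
  have := abel_nat Gn ψn N
  have hG0 : Gn 0 = 0 := by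
    simp only [hGn, dif_pos (by omega : 0 < N + 1)]
    exact hG _ (by simp)
  have hGN : Gn N = 0 := by
    simp only [hGn, dif_pos (by omega : N < N + 1)]
    exact hG _ (by simp)
  rw [h1, h2]
  rw [hG0, hGN] at this
  linarith [this]

theorem discrete_laplacian_truncation_below' {N M : ℕ} (h : ℝ) (hh : 0 < h)
    (φ : Fin N × Fin M → ℝ) (a : ℝ) :
    discGradNormSq h (fun p => min (φ p - a) 0) ≤
      - discInner h (discLap h φ) (fun p => min (φ p - a) 0) := by
  classical
  set ψ : Fin N × Fin M → ℝ := fun p => min (φ p - a) 0 with hψ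
  -- X-direction summation by parts
  have hX : ∑ p : Fin N × Fin M,
        (gradX h φ (p.1.succ, p.2) - gradX h φ (p.1.castSucc, p.2)) * ψ p
      = - ∑ q : Fin (N+1) × Fin M, gradX h φ q * (h * gradX h ψ q) := by
    rw [Fintype.sum_prod_type_right, Fintype.sum_prod_type_right, ← Finset.sum_neg_distrib]
    apply Finset.sum_congr rfl
    intro j _
    exact sbp (fun q => gradX h φ (q, j)) (fun i => ψ (i, j))
      (fun q => h * gradX h ψ (q, j))
      (fun q hq => by simp only [gradX]; exact dif_neg hq)
      (fun q hq => by
        simp only [gradX, dif_pos hq]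
        field_simp)
  -- Y-direction summation by parts
  have hY : ∑ p : Fin N × Fin M,
        (gradY h φ (p.1, p.2.succ) - gradY h φ (p.1, p.2.castSucc)) * ψ p
      = - ∑ q : Fin N × Fin (M+1), gradY h φ q * (h * gradY h ψ q) := by
    rw [Fintype.sum_prod_type, Fintype.sum_prod_type, ← Finset.sum_neg_distrib]
    apply Finset.sum_congr rfl
    intro i _
    exact sbp (fun q => gradY h φ (i, q)) (fun jj => ψ (i, jj))
      (fun q => h * gradY h ψ (i, q))
      (fun q hq => by simp only [gradY]; exact dif_neg hq)
      (fun q hq => by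
        simp only [gradY, dif_pos hq]
        field_simp)
  -- pointwise inequalities
  have hptX : ∀ q : Fin (N+1) × Fin M, gradX h ψ q ^ 2 ≤ gradX h φ q * gradX h ψ q := by
    intro q
    by_cases hq : 0 < q.1.val ∧ q.1.val < N
    · simp only [gradX, dif_pos hq, hψ]
      rw [div_pow, div_mul_div_comm, ← pow_two h,
        div_le_div_iff₀ (by positivity) (by positivity)]
      have hk := trunc_key (φ (⟨q.1.val, hq.2⟩, q.2)) (φ (⟨q.1.val - 1, by omega⟩, q.2)) a
      nlinarith [mul_le_mul_of_nonneg_right hk (sq_nonneg h)]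
    · simp only [gradX, dif_neg hq]; norm_num
  have hptY : ∀ q : Fin N × Fin (M+1), gradY h ψ q ^ 2 ≤ gradY h φ q * gradY h ψ q := by
    intro q
    by_cases hq : 0 < q.2.val ∧ q.2.val < M
    · simp only [gradY, dif_pos hq, hψ]
      rw [div_pow, div_mul_div_comm, ← pow_two h,
        div_le_div_iff₀ (by positivity) (by positivity)]
      have hk := trunc_key (φ (q.1, ⟨q.2.val, hq.2⟩)) (φ (q.1, ⟨q.2.val - 1, by omega⟩)) a
      nlinarith [mul_le_mul_of_nonneg_right hk (sq_nonneg h)]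
    · simp only [gradY, dif_neg hq]; norm_num
  -- expand the inner product
  have hexp : - discInner h (discLap h φ) ψ
      = h ^ 2 * ((∑ q : Fin (N+1) × Fin M, gradX h φ q * gradX h ψ q)
        + ∑ q : Fin N × Fin (M+1), gradY h φ q * gradY h ψ q) := by
    simp only [discInner, discLap]
    have e1 : ∑ p : Fin N × Fin M,
        ((gradX h φ (p.1.succ, p.2) - gradX h φ (p.1.castSucc, p.2)) / h
          + (gradY h φ (p.1, p.2.succ) - gradY h φ (p.1, p.2.castSucc)) / h) * ψ p
        = (1/h) * (∑ p : Fin N × Fin M,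
            (gradX h φ (p.1.succ, p.2) - gradX h φ (p.1.castSucc, p.2)) * ψ p)
          + (1/h) * ∑ p : Fin N × Fin M,
            (gradY h φ (p.1, p.2.succ) - gradY h φ (p.1, p.2.castSucc)) * ψ p := by
      rw [Finset.mul_sum, Finset.mul_sum, ← Finset.sum_add_distrib]
      apply Finset.sum_congr rfl
      intro p _
      field_simp
    rw [e1, hX, hY]
    have s1 : ∑ q : Fin (N+1) × Fin M, gradX h φ q * (h * gradX h ψ q)
        = h * ∑ q : Fin (N+1) × Fin M, gradX h φ q * gradX h ψ q := by
      rw [Finset.mul_sum]; exact Finset.sum_congr rfl (fun q _ => by ring)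
    have s2 : ∑ q : Fin N × Fin (M+1), gradY h φ q * (h * gradY h ψ q)
        = h * ∑ q : Fin N × Fin (M+1), gradY h φ q * gradY h ψ q := by
      rw [Finset.mul_sum]; exact Finset.sum_congr rfl (fun q _ => by ring)
    rw [s1, s2]
    field_simp
    ring
  rw [hexp]
  simp only [discGradNormSq]
  apply mul_le_mul_of_nonneg_left _ (by positivity)
  exact add_le_add (Finset.sum_le_sum fun q _ => hptX q)
    (Finset.sum_le_sum fun q _ => hptY q)



theorem discrete_laplacian_truncation_below {N M : ℕ} (h : ℝ) (hh : 0 < h)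
    (φ : Fin N × Fin M → ℝ) (a : ℝ) :
    discGradNormSq h (fun p => min (φ p - a) 0) ≤
      - discInner h (discLap h φ) (fun p => min (φ p - a) 0) := by
  exact discrete_laplacian_truncation_below' h hh φ a
end

section
/- Let φ : Fin N × Fin M → ℝ, b ∈ ℝ, and φ₊ = max(φ − b, 0) pointwise. With the cell-centered finite difference Laplacian Δ_h, discrete gradient ∇_h, discrete L² inner product ⟨·,·⟩ and homogeneous Neumann boundary conditions, ‖∇_h φ₊‖² ≤ −⟨Δ_h φ, φ₊⟩. -/
/-!
Summation by parts, with the boundary terms killed by the Neumann condition, turns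
`-⟨Δₕ φ, ψ⟩` into the discrete Dirichlet form `⟨∇ₕ φ, ∇ₕ ψ⟩`. For `ψ = f ∘ φ` with `f` monotone
and 1-Lipschitz, every face contributes `(f a - f b)² ≤ (a - b) (f a - f b)`, and the truncation
`x ↦ max (x - b) 0` is such an `f`.
-/

theorem Monotone.sq_sub_le_mul_sub {f : ℝ → ℝ} (hmono : Monotone f)
    (hlip : LipschitzWith 1 f) (x y : ℝ) :
    (f x - f y) ^ 2 ≤ (x - y) * (f x - f y) := by
  have hle : |f x - f y| ≤ |x - y| := by
    simpa [Real.dist_eq] using hlip.dist_le_mul x y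
  have hnonneg : 0 ≤ (x - y) * (f x - f y) := by
    rcases le_total y x with hxy | hxy
    · exact mul_nonneg (sub_nonneg.2 hxy) (sub_nonneg.2 (hmono hxy))
    · exact mul_nonneg_of_nonpos_of_nonpos (sub_nonpos.2 hxy) (sub_nonpos.2 (hmono hxy))
  calc (f x - f y) ^ 2 = |f x - f y| * |f x - f y| := by rw [sq, abs_mul_abs_self]
    _ ≤ |x - y| * |f x - f y| := by gcongr
    _ = (x - y) * (f x - f y) := by rw [← abs_mul, abs_of_nonneg hnonneg]

theorem sum_range_sub_mul_eq_neg_sum {a v : ℕ → ℝ} {n : ℕ} (ha₀ : a 0 = 0) (haₙ : a n = 0) :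
    ∑ i ∈ Finset.range n, (a (i + 1) - a i) * v i
      = -∑ i ∈ Finset.range (n + 1), a i * (v i - v (i - 1)) := by
  simp only [sub_mul, mul_sub, Finset.sum_sub_distrib]
  rw [Finset.sum_range_succ (fun i => a i * v i), Finset.sum_range_succ' (fun i => a i * v (i - 1))]
  simp [ha₀, haₙ]

/-- Difference across face `q` of a row of `n` cells, face `q` separating cells `q - 1` and `q`;
the boundary faces `0` and `n` carry no flux. -/
noncomputable def faceDiff {n : ℕ} (u : Fin n → ℝ) (q : Fin (n + 1)) : ℝ :=
  if hq : 0 < q.val ∧ q.val < n then u ⟨q.val, hq.2⟩ - u ⟨q.val - 1, by omega⟩ else 0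

theorem sum_faceDiff_mul {n : ℕ} (u v : Fin n → ℝ) :
    ∑ i : Fin n, (faceDiff u i.succ - faceDiff u i.castSucc) * v i
      = -∑ q : Fin (n + 1), faceDiff u q * faceDiff v q := by
  set a : ℕ → ℝ := fun q => if hq : q < n + 1 then faceDiff u ⟨q, hq⟩ else 0
  set w : ℕ → ℝ := fun i => if hi : i < n then v ⟨i, hi⟩ else 0
  have hlhs : ∀ i : Fin n, (faceDiff u i.succ - faceDiff u i.castSucc) * v i
      = (a (i + 1) - a i) * w i := by
    intro i
    simp [a, w, Fin.succ, Fin.castSucc, Fin.castAdd, Fin.castLE]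
  have hrhs : ∀ q : Fin (n + 1), faceDiff u q * faceDiff v q = a q * (w q - w (q - 1)) := by
    intro q
    simp only [a, w, faceDiff, dif_pos q.isLt]
    split_ifs <;> first | (exfalso; omega) | simp
  rw [Fintype.sum_congr _ _ hlhs, Fintype.sum_congr _ _ hrhs,
    Fin.sum_univ_eq_sum_range (fun i => (a (i + 1) - a i) * w i),
    Fin.sum_univ_eq_sum_range (fun q => a q * (w q - w (q - 1)))]
  exact sum_range_sub_mul_eq_neg_sum (by simp [a, faceDiff]) (by simp [a, faceDiff])

theorem sq_faceDiff_comp_le {n : ℕ} {f : ℝ → ℝ} (hmono : Monotone f) (hlip : LipschitzWith 1 f)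
    (u : Fin n → ℝ) (q : Fin (n + 1)) :
    faceDiff (f ∘ u) q ^ 2 ≤ faceDiff u q * faceDiff (f ∘ u) q := by
  unfold faceDiff
  split_ifs
  · exact hmono.sq_sub_le_mul_sub hlip _ _
  · simp

section Grid

variable {N M : ℕ} (h : ℝ)

theorem gradX_eq_faceDiff (φ : Fin N × Fin M → ℝ) (q : Fin (N + 1) × Fin M) :
    gradX h φ q = faceDiff (fun i => φ (i, q.2)) q.1 / h := by
  unfold gradX faceDiff; split_ifs <;> simp

theorem gradY_eq_faceDiff (φ : Fin N × Fin M → ℝ) (q : Fin N × Fin (M + 1)) :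
    gradY h φ q = faceDiff (fun j => φ (q.1, j)) q.2 / h := by
  unfold gradY faceDiff; split_ifs <;> simp

theorem sum_div_gradX_mul (φ ψ : Fin N × Fin M → ℝ) :
    ∑ p : Fin N × Fin M, (gradX h φ (p.1.succ, p.2) - gradX h φ (p.1.castSucc, p.2)) / h * ψ p
      = -∑ q : Fin (N + 1) × Fin M, gradX h φ q * gradX h ψ q := by
  simp only [gradX_eq_faceDiff]
  rw [Fintype.sum_prod_type_right, Fintype.sum_prod_type_right, ← Finset.sum_neg_distrib]
  refine Fintype.sum_congr _ _ fun j => ?_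
  calc _ = (∑ i : Fin N, (faceDiff (fun i => φ (i, j)) i.succ
        - faceDiff (fun i => φ (i, j)) i.castSucc) * ψ (i, j)) / h ^ 2 := by
        rw [Finset.sum_div]
        exact Fintype.sum_congr _ _ fun i => by ring
    _ = _ := by
        rw [sum_faceDiff_mul, neg_div, Finset.sum_div]
        exact congrArg _ (Fintype.sum_congr _ _ fun q => by ring)

theorem sum_div_gradY_mul (φ ψ : Fin N × Fin M → ℝ) :
    ∑ p : Fin N × Fin M, (gradY h φ (p.1, p.2.succ) - gradY h φ (p.1, p.2.castSucc)) / h * ψ p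
      = -∑ q : Fin N × Fin (M + 1), gradY h φ q * gradY h ψ q := by
  simp only [gradY_eq_faceDiff]
  rw [Fintype.sum_prod_type, Fintype.sum_prod_type, ← Finset.sum_neg_distrib]
  refine Fintype.sum_congr _ _ fun i => ?_
  calc _ = (∑ j : Fin M, (faceDiff (fun j => φ (i, j)) j.succ
        - faceDiff (fun j => φ (i, j)) j.castSucc) * ψ (i, j)) / h ^ 2 := by
        rw [Finset.sum_div]
        exact Fintype.sum_congr _ _ fun j => by ring
    _ = _ := by
        rw [sum_faceDiff_mul, neg_div, Finset.sum_div]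
        exact congrArg _ (Fintype.sum_congr _ _ fun q => by ring)

theorem discInner_discLap (φ ψ : Fin N × Fin M → ℝ) :
    discInner h (discLap h φ) ψ
      = -(h ^ 2 * ((∑ q : Fin (N + 1) × Fin M, gradX h φ q * gradX h ψ q)
          + ∑ q : Fin N × Fin (M + 1), gradY h φ q * gradY h ψ q)) := by
  simp only [discInner, discLap, add_mul, Finset.sum_add_distrib, sum_div_gradX_mul,
    sum_div_gradY_mul]
  ring

theorem sq_gradX_comp_le {f : ℝ → ℝ} (hmono : Monotone f)
    (hlip : LipschitzWith 1 f) (φ : Fin N × Fin M → ℝ) (q : Fin (N + 1) × Fin M) :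
    gradX h (f ∘ φ) q ^ 2 ≤ gradX h φ q * gradX h (f ∘ φ) q := by
  rw [gradX_eq_faceDiff, gradX_eq_faceDiff, div_pow, div_mul_div_comm, ← sq]
  gcongr
  exact sq_faceDiff_comp_le hmono hlip (fun i => φ (i, q.2)) q.1

theorem sq_gradY_comp_le {f : ℝ → ℝ} (hmono : Monotone f)
    (hlip : LipschitzWith 1 f) (φ : Fin N × Fin M → ℝ) (q : Fin N × Fin (M + 1)) :
    gradY h (f ∘ φ) q ^ 2 ≤ gradY h φ q * gradY h (f ∘ φ) q := by
  rw [gradY_eq_faceDiff, gradY_eq_faceDiff, div_pow, div_mul_div_comm, ← sq]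
  gcongr
  exact sq_faceDiff_comp_le hmono hlip (fun j => φ (q.1, j)) q.2

theorem discGradNormSq_comp_le {f : ℝ → ℝ} (hmono : Monotone f)
    (hlip : LipschitzWith 1 f) (φ : Fin N × Fin M → ℝ) :
    discGradNormSq h (f ∘ φ) ≤ -discInner h (discLap h φ) (f ∘ φ) := by
  rw [discInner_discLap, neg_neg, discGradNormSq]
  gcongr with q _ q _
  · exact sq_gradX_comp_le h hmono hlip φ q
  · exact sq_gradY_comp_le h hmono hlip φ q

end Grid

theorem discrete_laplacian_truncation_above_general {N M : ℕ} (h : ℝ)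
    (φ : Fin N × Fin M → ℝ) (b : ℝ) :
    discGradNormSq h (fun p => max (φ p - b) 0) ≤
      - discInner h (discLap h φ) (fun p => max (φ p - b) 0) := by
  have hmono : Monotone fun x : ℝ => max (x - b) 0 :=
    fun _ _ hxy => max_le_max_right 0 (sub_le_sub_right hxy b)
  have hlip : LipschitzWith 1 fun x : ℝ => max (x - b) 0 :=
    (LipschitzWith.of_dist_le_mul fun x y => by simp [Real.dist_eq]).max_const 0
  exact discGradNormSq_comp_le h hmono hlip φ

theorem discrete_laplacian_truncation_above {N M : ℕ} (h : ℝ) (hh : 0 < h)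
    (φ : Fin N × Fin M → ℝ) (b : ℝ) :
    discGradNormSq h (fun p => max (φ p - b) 0) ≤
      - discInner h (discLap h φ) (fun p => max (φ p - b) 0) :=
  discrete_laplacian_truncation_above_general h φ b
end

section
/- Suppose 0 < φⁿ < 1 pointwise, λ ≥ 0 with 4(λ+1) − θ > 0, and φⁿ⁺¹ satisfies (1/τ)(φⁿ⁺¹ − φⁿ) − ε²Δ_h φⁿ⁺¹ + ν(φⁿ)φⁿ⁺¹ = r(φⁿ) where ν(s) = (λ+1)(1/s + 1/(1−s)) − θ and r(s) = −ln(s) + ln(1−s) + (λ+1)/(1−s) − θ(1−s). If r(s) > 0 for all s ∈ (0,1), then φⁿ⁺¹ > 0 pointwise. -/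
noncomputable def nuCoef (lam θ s : ℝ) : ℝ := (lam + 1) * (1 / s + 1 / (1 - s)) - θ

noncomputable def rCoef (lam θ s : ℝ) : ℝ :=
  -Real.log s + Real.log (1 - s) + (lam + 1) / (1 - s) - θ * (1 - s)

/-! Instead of testing with the negative part, argue at a minimum point `q` of `φ1`. There the
discrete Laplacian is a nonnegative second difference divided by `h²`, and
`ν(s) ≥ 4(λ+1) − θ > 0` because `1/s + 1/(1-s) ≥ 4` on `(0,1)`. So if `φ1 q ≤ 0`, every term on
the left of the scheme at `q` is `≤ 0`, the time difference strictly so, contradicting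
`r(φ0 q) > 0`. -/

theorem gradX_eq_div {N M : ℕ} (h : ℝ) (φ : Fin N × Fin M → ℝ) (p : Fin (N + 1) × Fin M) :
    gradX h φ p = gradX 1 φ p / h := by
  unfold gradX
  split_ifs <;> simp

theorem gradY_eq_gradX_swap {N M : ℕ} (h : ℝ) (φ : Fin N × Fin M → ℝ)
    (p : Fin N × Fin (M + 1)) : gradY h φ p = gradX h (φ ∘ Prod.swap) p.swap :=
  rfl

section Minimum

variable {N M : ℕ} {φ : Fin N × Fin M → ℝ} {q : Fin N × Fin M}

theorem gradX_one_succ_nonneg_of_forall_le (hq : ∀ y, φ q ≤ φ y) :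
    0 ≤ gradX 1 φ (q.1.succ, q.2) := by
  unfold gradX
  split_ifs with hp
  · simpa using hq _
  · rfl

theorem gradX_one_castSucc_nonpos_of_forall_le (hq : ∀ y, φ q ≤ φ y) :
    gradX 1 φ (q.1.castSucc, q.2) ≤ 0 := by
  unfold gradX
  split_ifs with hp
  · simpa using hq _
  · rfl

theorem gradX_succ_sub_castSucc_div_nonneg (h : ℝ) (hq : ∀ y, φ q ≤ φ y) :
    0 ≤ (gradX h φ (q.1.succ, q.2) - gradX h φ (q.1.castSucc, q.2)) / h := by
  rw [gradX_eq_div h, gradX_eq_div h φ (q.1.castSucc, q.2), ← sub_div, div_div, ← sq]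
  exact div_nonneg (by linarith [gradX_one_succ_nonneg_of_forall_le hq,
    gradX_one_castSucc_nonpos_of_forall_le hq]) (sq_nonneg h)

theorem discLap_nonneg_of_forall_le (h : ℝ) (hq : ∀ y, φ q ≤ φ y) : 0 ≤ discLap h φ q :=
  add_nonneg (gradX_succ_sub_castSucc_div_nonneg h hq)
    (gradX_succ_sub_castSucc_div_nonneg (φ := φ ∘ Prod.swap) (q := q.swap) h fun y => hq y.swap)

end Minimum

theorem four_le_one_div_add_one_div_one_sub {s : ℝ} (hs : s ∈ Set.Ioo (0 : ℝ) 1) :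
    4 ≤ 1 / s + 1 / (1 - s) := by
  obtain ⟨hs0, hs1⟩ := hs
  have h1s : 0 < 1 - s := by linarith
  rw [div_add_div _ _ hs0.ne' h1s.ne', le_div_iff₀ (by positivity)]
  nlinarith [sq_nonneg (2 * s - 1)]

theorem nuCoef_pos {lam θ s : ℝ} (hlam : 0 ≤ lam + 1) (hcoer : 0 < 4 * (lam + 1) - θ)
    (hs : s ∈ Set.Ioo (0 : ℝ) 1) : 0 < nuCoef lam θ s := by
  have := mul_le_mul_of_nonneg_left (four_le_one_div_add_one_div_one_sub hs) hlam
  unfold nuCoef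
  linarith

theorem discrete_maximum_principle_lower_general {N M : ℕ} (h τ ε lam θ : ℝ)
    (hτ : 0 < τ) (hlam : 0 ≤ lam)
    (hcoer : 0 < 4 * (lam + 1) - θ)
    (φ0 φ1 : Fin N × Fin M → ℝ)
    (h0 : ∀ p, φ0 p ∈ Set.Ioo (0:ℝ) 1)
    (hscheme : ∀ p, (φ1 p - φ0 p) / τ - ε ^ 2 * discLap h φ1 p
      + nuCoef lam θ (φ0 p) * φ1 p = rCoef lam θ (φ0 p))
    (hr : ∀ s : ℝ, s ∈ Set.Ioo (0:ℝ) 1 → 0 < rCoef lam θ s) :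
    ∀ p, 0 < φ1 p := by
  intro p
  have : Nonempty (Fin N × Fin M) := ⟨p⟩
  obtain ⟨q, hq⟩ := Finite.exists_min φ1
  refine lt_of_lt_of_le ?_ (hq p)
  by_contra! hle
  have hν := nuCoef_pos (by linarith) hcoer (h0 q)
  have hΔ := discLap_nonneg_of_forall_le h hq
  have hdrift : (φ1 q - φ0 q) / τ < 0 := div_neg_of_neg_of_pos (by linarith [(h0 q).1]) hτ
  linarith [hscheme q, hr _ (h0 q), mul_nonpos_of_nonneg_of_nonpos hν.le hle,
    mul_nonneg (sq_nonneg ε) hΔ]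

theorem discrete_maximum_principle_lower {N M : ℕ} (h τ ε lam θ : ℝ)
    (hh : 0 < h) (hτ : 0 < τ) (hε : 0 < ε) (hlam : 0 ≤ lam)
    (hcoer : 0 < 4 * (lam + 1) - θ)
    (φ0 φ1 : Fin N × Fin M → ℝ)
    (h0 : ∀ p, φ0 p ∈ Set.Ioo (0:ℝ) 1)
    (hscheme : ∀ p, (φ1 p - φ0 p) / τ - ε ^ 2 * discLap h φ1 p
      + nuCoef lam θ (φ0 p) * φ1 p = rCoef lam θ (φ0 p))
    (hr : ∀ s : ℝ, s ∈ Set.Ioo (0:ℝ) 1 → 0 < rCoef lam θ s) :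
    ∀ p, 0 < φ1 p :=
  discrete_maximum_principle_lower_general h τ ε lam θ hτ hlam hcoer φ0 φ1 h0 hscheme hr
end

section
/- Suppose 0 < φⁿ < 1 pointwise, λ ≥ 0 with 4(λ+1) − θ > 0, and φⁿ⁺¹ satisfies (1/τ)(φⁿ⁺¹ − φⁿ) − ε²Δ_h φⁿ⁺¹ + ν(φⁿ)φⁿ⁺¹ = r(φⁿ) with ν, r as in the stabilized scheme. If r(s) − ν(s) < 0 for all s ∈ (0,1), then φⁿ⁺¹ < 1 pointwise. -/
/-!
If `φⁿ⁺¹ ≥ 1` somewhere, look at a point `p` where `φⁿ⁺¹` is maximal. There the discrete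
Laplacian is nonpositive, `φⁿ⁺¹(p) > φⁿ(p)`, and `ν(φⁿ(p)) ≥ 4(λ+1) − θ > 0`, so the scheme at `p`
forces `r(φⁿ(p)) ≥ ν(φⁿ(p)) φⁿ⁺¹(p) ≥ ν(φⁿ(p))`, contradicting `r − ν < 0` on `(0,1)`.
-/

section MaximumPoint

variable {N M : ℕ} {h : ℝ} {φ : Fin N × Fin M → ℝ} {p : Fin N × Fin M}

theorem gradX_succ_nonpos_of_forall_le (hh : 0 ≤ h) (hp : ∀ q, φ q ≤ φ p) :
    gradX h φ (p.1.succ, p.2) ≤ 0 := by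
  unfold gradX
  split_ifs with hc
  · have hprev : ((⟨(p.1.succ : Fin (N + 1)).val - 1, by omega⟩ : Fin N), p.2) = p := by
      ext <;> simp [Fin.val_succ]
    rw [hprev]
    exact div_nonpos_of_nonpos_of_nonneg (sub_nonpos.2 (hp _)) hh
  · exact le_rfl

theorem gradX_castSucc_nonneg_of_forall_le (hh : 0 ≤ h) (hp : ∀ q, φ q ≤ φ p) :
    0 ≤ gradX h φ (p.1.castSucc, p.2) := by
  unfold gradX
  split_ifs with hc
  · have hcur : ((⟨(p.1.castSucc : Fin (N + 1)).val, hc.2⟩ : Fin N), p.2) = p := by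
      ext <;> simp
    rw [hcur]
    exact div_nonneg (sub_nonneg.2 (hp _)) hh
  · exact le_rfl

theorem gradY_succ_nonpos_of_forall_le (hh : 0 ≤ h) (hp : ∀ q, φ q ≤ φ p) :
    gradY h φ (p.1, p.2.succ) ≤ 0 := by
  unfold gradY
  split_ifs with hc
  · have hprev : (p.1, (⟨(p.2.succ : Fin (M + 1)).val - 1, by omega⟩ : Fin M)) = p := by
      ext <;> simp [Fin.val_succ]
    rw [hprev]
    exact div_nonpos_of_nonpos_of_nonneg (sub_nonpos.2 (hp _)) hh
  · exact le_rfl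

theorem gradY_castSucc_nonneg_of_forall_le (hh : 0 ≤ h) (hp : ∀ q, φ q ≤ φ p) :
    0 ≤ gradY h φ (p.1, p.2.castSucc) := by
  unfold gradY
  split_ifs with hc
  · have hcur : (p.1, (⟨(p.2.castSucc : Fin (M + 1)).val, hc.2⟩ : Fin M)) = p := by
      ext <;> simp
    rw [hcur]
    exact div_nonneg (sub_nonneg.2 (hp _)) hh
  · exact le_rfl

theorem discLap_nonpos_of_forall_le (hh : 0 ≤ h) (hp : ∀ q, φ q ≤ φ p) :
    discLap h φ p ≤ 0 := by
  have hx := sub_nonpos.2 ((gradX_succ_nonpos_of_forall_le hh hp).trans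
    (gradX_castSucc_nonneg_of_forall_le hh hp))
  have hy := sub_nonpos.2 ((gradY_succ_nonpos_of_forall_le hh hp).trans
    (gradY_castSucc_nonneg_of_forall_le hh hp))
  exact add_nonpos (div_nonpos_of_nonpos_of_nonneg hx hh) (div_nonpos_of_nonpos_of_nonneg hy hh)

end MaximumPoint

theorem discrete_maximum_principle_upper_general {N M : ℕ} (h τ ε lam θ : ℝ)
    (hh : 0 < h) (hτ : 0 < τ) (hlam : 0 ≤ lam)
    (hcoer : 0 < 4 * (lam + 1) - θ)
    (φ0 φ1 : Fin N × Fin M → ℝ)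
    (h0 : ∀ p, φ0 p ∈ Set.Ioo (0:ℝ) 1)
    (hscheme : ∀ p, (φ1 p - φ0 p) / τ - ε ^ 2 * discLap h φ1 p
      + nuCoef lam θ (φ0 p) * φ1 p = rCoef lam θ (φ0 p))
    (hru : ∀ s : ℝ, s ∈ Set.Ioo (0:ℝ) 1 → rCoef lam θ s - nuCoef lam θ s < 0) :
    ∀ p, φ1 p < 1 := by
  by_contra! ⟨q, hq⟩
  have : Nonempty (Fin N × Fin M) := ⟨q⟩
  obtain ⟨p, hp⟩ := Finite.exists_max φ1
  have hp1 : 1 ≤ φ1 p := hq.trans (hp q)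
  have hgrowth : 0 < (φ1 p - φ0 p) / τ := div_pos (by linarith [(h0 p).2]) hτ
  have hdiffusion : 0 ≤ -(ε ^ 2 * discLap h φ1 p) :=
    neg_nonneg.2 (mul_nonpos_of_nonneg_of_nonpos (sq_nonneg ε)
      (discLap_nonpos_of_forall_le hh.le hp))
  have hreaction : nuCoef lam θ (φ0 p) ≤ nuCoef lam θ (φ0 p) * φ1 p :=
    le_mul_of_one_le_right (nuCoef_pos (by linarith) hcoer (h0 p)).le hp1
  linarith [hscheme p, hru _ (h0 p)]

theorem discrete_maximum_principle_upper {N M : ℕ} (h τ ε lam θ : ℝ)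
    (hh : 0 < h) (hτ : 0 < τ) (hε : 0 < ε) (hlam : 0 ≤ lam)
    (hcoer : 0 < 4 * (lam + 1) - θ)
    (φ0 φ1 : Fin N × Fin M → ℝ)
    (h0 : ∀ p, φ0 p ∈ Set.Ioo (0:ℝ) 1)
    (hscheme : ∀ p, (φ1 p - φ0 p) / τ - ε ^ 2 * discLap h φ1 p
      + nuCoef lam θ (φ0 p) * φ1 p = rCoef lam θ (φ0 p))
    (hru : ∀ s : ℝ, s ∈ Set.Ioo (0:ℝ) 1 → rCoef lam θ s - nuCoef lam θ s < 0) :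
    ∀ p, φ1 p < 1 :=
  discrete_maximum_principle_upper_general h τ ε lam θ hh hτ hlam hcoer φ0 φ1 h0 hscheme hru
end
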